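/- arXiv:2307.00816 — 2 statements merged into one kernel-verified Lean document; each statement's English description precedes it below -/
import Mathlib

section
/- The matrices D_Θ = [[2, 1], [-1, 0]] and D_Y = [[1, 0], [-1, 1]] generate SL(2, ℤ). -/
/-! Both generators `S` and `T` of `SL(2, ℤ)` are words in the two twists:
`S⁻¹ = D_Θ D_Y²` and `T = S⁻¹ D_Y S`. -/

open Matrix.SpecialLinearGroup ModularGroup MatrixGroups

namespace DehnTwist

def twistΘ : SL(2, ℤ) := ⟨!![2, 1; -1, 0], by norm_num [Matrix.det_fin_two_of]⟩

def twistY : SL(2, ℤ) := ⟨!![1, 0; -1, 1], by norm_num [Matrix.det_fin_two_of]⟩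

lemma S_inv_eq : S⁻¹ = twistΘ * twistY ^ 2 := by
  apply Subtype.ext
  rw [coe_inv, coe_mul, coe_pow, coe_S, sq]
  norm_num [twistΘ, twistY, Matrix.mul_fin_two, Matrix.adjugate_fin_two]

lemma T_eq : T = S⁻¹ * twistY * S := by
  apply Subtype.ext
  rw [coe_mul, coe_mul, coe_inv, coe_S, coe_T]
  norm_num [twistY, Matrix.mul_fin_two, Matrix.adjugate_fin_two]

lemma closure_twistΘ_twistY_eq_top : Subgroup.closure {twistΘ, twistY} = ⊤ := by
  set K := Subgroup.closure {twistΘ, twistY}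
  have hΘ : twistΘ ∈ K := Subgroup.subset_closure (by simp)
  have hY : twistY ∈ K := Subgroup.subset_closure (by simp)
  have hS : S ∈ K := by
    rw [← inv_inv S, S_inv_eq]
    exact K.inv_mem (K.mul_mem hΘ (K.pow_mem hY 2))
  have hT : T ∈ K := by
    rw [T_eq]
    exact K.mul_mem (K.mul_mem (K.inv_mem hS) hY) hS
  rw [eq_top_iff, ← SpecialLinearGroup.SL2Z_generators, Subgroup.closure_le]
  rintro g (rfl | rfl | _) <;> assumption

end DehnTwist

theorem dehn_twists_generate_SL2Z :
    Subgroup.closure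
      ({⟨!![2, 1; -1, 0], by norm_num [Matrix.det_fin_two_of]⟩,
        ⟨!![1, 0; -1, 1], by norm_num [Matrix.det_fin_two_of]⟩} :
        Set (Matrix.SpecialLinearGroup (Fin 2) ℤ)) = ⊤ :=
  DehnTwist.closure_twistΘ_twistY_eq_top
end

section
/- The subgroup of SL(2, ℤ) generated by the matrices [[3, 2], [-2, -1]] and [[1, 0], [-1, 1]] has index 3 in SL(2, ℤ). -/
/-!
Reduced modulo 2, both generators fix `e₂ = (0, 1)`, so the subgroup they generate lies in the
stabilizer of `e₂` for the action of `SL(2, ℤ)` on `𝔽₂²`. As `1`, `S` and `T` send `e₂` to the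
three different nonzero vectors, their cosets are distinct. Conversely, `S` and `T` permute these
three cosets (six explicit words in the generators witness this), and since `S` and `T` generate
`SL(2, ℤ)` there are no further cosets.
-/

open Matrix ModularGroup Subgroup
open scoped MatrixGroups Pointwise

section

variable {G : Type*} [Group G]

theorem Finset.smul_mem_of_closure_eq_top {α : Type*} [MulAction G α] {s : Set G}
    (hs : closure s = ⊤) {Q : Finset α} (hQ : ∀ g ∈ s, ∀ q ∈ Q, g • q ∈ Q) (g : G) {q : α}
    (hq : q ∈ Q) : g • q ∈ Q := by
  classical
  have hle : closure s ≤ MulAction.stabilizer G Q :=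
    (closure_le _).mpr fun x hx => MulAction.mem_stabilizer_finset'.mpr (hQ x hx)
  exact MulAction.mem_stabilizer_finset'.mp (hle (hs ▸ mem_top g)) hq

theorem Subgroup.index_eq_card_of_closure_eq_top {H : Subgroup G} {s : Set G}
    (hs : closure s = ⊤) (Q : Finset (G ⧸ H)) (h1 : ((1 : G) : G ⧸ H) ∈ Q)
    (hQ : ∀ g ∈ s, ∀ q ∈ Q, g • q ∈ Q) : H.index = Q.card := by
  have hmem (x : G ⧸ H) : x ∈ Q := by
    induction x using QuotientGroup.induction_on with
    | H g => simpa using Finset.smul_mem_of_closure_eq_top hs hQ g h1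
  rw [index, ← Nat.card_eq_finsetCard]
  exact (Nat.card_congr (Equiv.subtypeUnivEquiv hmem)).symm

theorem QuotientGroup.mk_ne_mk_of_le_comap_stabilizer {M α : Type*} [Group M] [MulAction M α]
    (f : G →* M) {H : Subgroup G} {a : α} (hH : H ≤ (MulAction.stabilizer M a).comap f)
    {x y : G} (h : f x • a ≠ f y • a) : (x : G ⧸ H) ≠ y := by
  rw [Ne, QuotientGroup.eq]
  intro hxy
  have hfix := hH hxy
  rw [mem_comap, MulAction.mem_stabilizer_iff, map_mul, map_inv, mul_smul,
    inv_smul_eq_iff] at hfix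
  exact h hfix.symm

end

namespace IndexThreeSubgroup

def A : SL(2, ℤ) := ⟨!![3, 2; -2, -1], by norm_num [Matrix.det_fin_two_of]⟩

def B : SL(2, ℤ) := ⟨!![1, 0; -1, 1], by norm_num [Matrix.det_fin_two_of]⟩

def H : Subgroup SL(2, ℤ) := closure {A, B}

def e₂ : Fin 2 → ZMod 2 := ![0, 1]

abbrev reduceModTwo : SL(2, ℤ) →* SL(2, ZMod 2) :=
  SpecialLinearGroup.map (Int.castRingHom (ZMod 2))

theorem le_comap_stabilizer :
    H ≤ (MulAction.stabilizer SL(2, ZMod 2) e₂).comap reduceModTwo := by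
  rw [H, closure_le]
  rintro g (rfl | rfl) <;> exact MulAction.mem_stabilizer_iff.mpr (by decide)

open Classical in
noncomputable def cosets : Finset (SL(2, ℤ) ⧸ H) := {↑(1 : SL(2, ℤ)), ↑S, ↑T}

theorem one_mem_cosets : ((1 : SL(2, ℤ)) : SL(2, ℤ) ⧸ H) ∈ cosets := by
  classical
  exact Finset.mem_insert_self _ _

theorem card_cosets : cosets.card = 3 := by
  classical
  have hne (x y : SL(2, ℤ)) (h : reduceModTwo x • e₂ ≠ reduceModTwo y • e₂) :
      (x : SL(2, ℤ) ⧸ H) ≠ y :=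
    QuotientGroup.mk_ne_mk_of_le_comap_stabilizer _ le_comap_stabilizer h
  exact Finset.card_eq_three.mpr
    ⟨_, _, _, hne _ _ (by decide), hne _ _ (by decide), hne _ _ (by decide), rfl⟩

theorem smul_mem_cosets : ∀ g ∈ ({S, T} : Set SL(2, ℤ)), ∀ q ∈ cosets, g • q ∈ cosets := by
  have hAB : A * B ∈ H := mul_mem (subset_closure (by simp)) (subset_closure (by simp))
  have hB : B ∈ H := subset_closure (by simp)
  simp only [cosets, Set.mem_insert_iff, Set.mem_singleton_iff, Finset.mem_insert,
    Finset.mem_singleton, forall_eq_or_imp, forall_eq, MulAction.Quotient.smul_coe, smul_eq_mul,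
    QuotientGroup.eq]
  refine ⟨⟨Or.inr (Or.inl ?_), Or.inl ?_, Or.inr (Or.inr ?_)⟩,
    Or.inr (Or.inr ?_), Or.inr (Or.inl ?_), Or.inl ?_⟩
  · simp
  · rw [show (S * S)⁻¹ * 1 = (A * B) ^ 2 by decide]
    exact pow_mem hAB 2
  · rw [show (S * T)⁻¹ * T = A * B by decide]
    exact hAB
  · simp
  · rw [show (T * S)⁻¹ * S = B⁻¹ by decide]
    exact inv_mem hB
  · rw [show (T * T)⁻¹ * 1 = (A * B) ^ 3 * B by decide]
    exact mul_mem (pow_mem hAB 3) hB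

end IndexThreeSubgroup

theorem index_three_subgroup :
    (Subgroup.closure
      ({⟨!![3, 2; -2, -1], by norm_num [Matrix.det_fin_two_of]⟩,
        ⟨!![1, 0; -1, 1], by norm_num [Matrix.det_fin_two_of]⟩} :
        Set (Matrix.SpecialLinearGroup (Fin 2) ℤ))).index = 3 := by
  rw [← IndexThreeSubgroup.card_cosets]
  exact index_eq_card_of_closure_eq_top SpecialLinearGroup.SL2Z_generators _
    IndexThreeSubgroup.one_mem_cosets IndexThreeSubgroup.smul_mem_cosets
end
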